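/- arXiv:2505.24114 — 4 statements merged into one kernel-verified Lean document; each statement's English description precedes it below -/
import Mathlib

section
/- For real numbers 0 < d2 < d1 and dimension d = 3, the off-diagonal coupling entry a12 = (1/4) * ((d1+d2)^2 / 2^(d+1)) * ((1 + d2/d1)^d / (1 + (d2/d1)^d)) satisfies d2^2/4 < a12 < d1^2/4. -/
theorem coupling_offdiag_bounds (d1 d2 : ℝ) (h2 : 0 < d2) (h12 : d2 < d1) :
    d2 ^ 2 / 4 < (1 / 4) * ((d1 + d2) ^ 2 / 2 ^ (3 + 1)) *
      ((1 + d2 / d1) ^ 3 / (1 + (d2 / d1) ^ 3)) ∧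
    (1 / 4) * ((d1 + d2) ^ 2 / 2 ^ (3 + 1)) *
      ((1 + d2 / d1) ^ 3 / (1 + (d2 / d1) ^ 3)) < d1 ^ 2 / 4 := by
  have h1 : 0 < d1 := h2.trans h12
  have hden : 0 < 64 * (d1 ^ 3 + d2 ^ 3) := by positivity
  have hE : (1 / 4) * ((d1 + d2) ^ 2 / 2 ^ (3 + 1)) *
      ((1 + d2 / d1) ^ 3 / (1 + (d2 / d1) ^ 3))
      = (d1 + d2) ^ 5 / (64 * (d1 ^ 3 + d2 ^ 3)) := by
    have hd3 : d1 ^ 3 + d2 ^ 3 ≠ 0 := ne_of_gt (by positivity)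
    field_simp
    ring
  rw [hE]
  constructor
  · rw [div_lt_div_iff₀ (by norm_num) hden]
    nlinarith [mul_pos (sub_pos.2 h12)
      (by positivity : (0:ℝ) < 15 * d2 ^ 4 + 10 * d2 ^ 3 * d1 + 6 * d2 * d1 ^ 3 + d1 ^ 4),
      sq_nonneg d1, sq_nonneg d2]
  · rw [div_lt_div_iff₀ hden (by norm_num)]
    nlinarith [mul_pos (sub_pos.2 h12)
      (by positivity : (0:ℝ) < d2 ^ 4 + 6 * d2 ^ 3 * d1 + 10 * d2 * d1 ^ 3 + 15 * d1 ^ 4)]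
end

section
/- Let 0 < d2 < d1 and set a = ((d1+d2)^2 / 2^4) * ((d1+d2)^3 / (d1^3 + d2^3)) (the off-diagonal entry of A with the factor 1/4 removed, d = 3). Then the linear function L(χ) = (2 d1^2 d2^2 - a (d1^2 + d2^2)) χ + (a d1^2 - d1^2 d2^2) is strictly positive for all χ in the closed interval [0,1]. -/
theorem linear_positive_on_interval (d1 d2 : ℝ) (h2 : 0 < d2) (h12 : d2 < d1)
    (a : ℝ) (ha : a = ((d1 + d2) ^ 2 / 2 ^ 4) * ((d1 + d2) ^ 3 / (d1 ^ 3 + d2 ^ 3)))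
    (χ : ℝ) (hχ : χ ∈ Set.Icc (0 : ℝ) 1) :
    0 < (2 * d1 ^ 2 * d2 ^ 2 - a * (d1 ^ 2 + d2 ^ 2)) * χ + (a * d1 ^ 2 - d1 ^ 2 * d2 ^ 2) := by
  obtain ⟨h0, h1⟩ := hχ
  have h1pos : 0 < d1 := h2.trans h12
  have hden : 0 < d1 ^ 3 + d2 ^ 3 := by positivity
  have ha' : a * (16 * (d1 ^ 3 + d2 ^ 3)) = (d1 + d2) ^ 5 := by
    rw [ha]; field_simp; ring
  have hlow : d2 ^ 2 < a := by
    rw [← mul_lt_mul_iff_of_pos_right (by positivity : (0:ℝ) < 16 * (d1 ^ 3 + d2 ^ 3)), ha']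
    nlinarith [sq_nonneg (d1 - d2), sq_nonneg (d1 + d2), mul_pos h2 (sub_pos.2 h12),
      sq_nonneg ((d1 - d2) * d2), mul_pos (mul_pos h2 h2) (sub_pos.2 h12)]
  have hhigh : a < d1 ^ 2 := by
    rw [← mul_lt_mul_iff_of_pos_right (by positivity : (0:ℝ) < 16 * (d1 ^ 3 + d2 ^ 3)), ha']
    nlinarith [sq_nonneg (d1 - d2), mul_pos h1pos (sub_pos.2 h12),
      mul_pos (mul_pos h1pos h1pos) (sub_pos.2 h12), sq_nonneg ((d1 - d2) * d1)]
  have hL0 : 0 < d1 ^ 2 * (a - d2 ^ 2) :=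
    mul_pos (by positivity) (sub_pos.2 hlow)
  have hL1 : 0 < d2 ^ 2 * (d1 ^ 2 - a) :=
    mul_pos (by positivity) (sub_pos.2 hhigh)
  rcases le_or_gt χ (1/2) with hc | hc
  · nlinarith [mul_nonneg h0 hL1.le, mul_nonneg (sub_nonneg.2 hc) hL0.le]
  · nlinarith [mul_nonneg (sub_nonneg.2 h1) hL0.le, mul_nonneg (sub_nonneg.2 hc.le) hL1.le]
end

section
/- Let 0 < d2 < d1, a as above (d = 3), and suppose ρ_s > 0, α ∈ (0, π/2), φ ∈ (0,1), σ > 0, K_c > 0, det A > 0, D_tr(φ) ≥ 0, and χ ∈ (0,1). Then the expression χ' = (2 cot α / 9) ρ_s (1-φ) (1-χ) χ [(2χ-1) d1^2 d2^2 + a(d1^2 - (d1^2+d2^2)χ)] / { σ ( K_c (det A) (1-χ) φ χ + D_tr(φ) [ d1^2 d2^2 (1-χ)^2 + a(d1^2+d2^2)(1-χ)χ + d1^2 d2^2 χ^2 ] ) } is strictly positive, provided the denominator's bracketed sum is strictly positive. -/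
theorem chi_prime_positive (d1 d2 : ℝ) (h2 : 0 < d2) (h12 : d2 < d1)
    (a : ℝ) (ha : a = ((d1 + d2) ^ 2 / 2 ^ 4) * ((d1 + d2) ^ 3 / (d1 ^ 3 + d2 ^ 3)))
    (ρs α φ σ Kc detA Dtr χ : ℝ)
    (hρs : 0 < ρs) (hα : α ∈ Set.Ioo 0 (Real.pi / 2))
    (hφ : φ ∈ Set.Ioo (0 : ℝ) 1) (hσ : 0 < σ) (hKc : 0 < Kc)
    (hdetA : 0 < detA) (hDtr : 0 ≤ Dtr) (hχ : χ ∈ Set.Ioo (0 : ℝ) 1)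
    (hden : 0 < Kc * detA * (1 - χ) * φ * χ +
      Dtr * (d1 ^ 2 * d2 ^ 2 * (1 - χ) ^ 2 + a * (d1 ^ 2 + d2 ^ 2) * (1 - χ) * χ +
        d1 ^ 2 * d2 ^ 2 * χ ^ 2)) :
    0 < (2 * Real.cos α / Real.sin α / 9) * ρs * (1 - φ) * (1 - χ) * χ *
        ((2 * χ - 1) * d1 ^ 2 * d2 ^ 2 + a * (d1 ^ 2 - (d1 ^ 2 + d2 ^ 2) * χ)) /
      (σ * (Kc * detA * (1 - χ) * φ * χ +
        Dtr * (d1 ^ 2 * d2 ^ 2 * (1 - χ) ^ 2 + a * (d1 ^ 2 + d2 ^ 2) * (1 - χ) * χ +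
          d1 ^ 2 * d2 ^ 2 * χ ^ 2))) := by
  obtain ⟨hα0, hα2⟩ := hα
  obtain ⟨hφ0, hφ1⟩ := hφ
  obtain ⟨hχ0, hχ1⟩ := hχ
  have h1 : 0 < d1 := h2.trans h12
  have hcos : 0 < Real.cos α := Real.cos_pos_of_mem_Ioo ⟨by linarith [Real.pi_pos], hα2⟩
  have hsin : 0 < Real.sin α :=
    Real.sin_pos_of_pos_of_lt_pi hα0 (by linarith [Real.pi_pos])
  have hcube : 0 < d1 ^ 3 + d2 ^ 3 := by positivity
  have haL : d2 ^ 2 < a := by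
    rw [ha, div_mul_div_comm, lt_div_iff₀ (by positivity)]
    nlinarith [mul_pos (mul_pos (by positivity : (0:ℝ) < d1 + d2)
      (by linarith : (0:ℝ) < d1 - d2))
      (by nlinarith : (0:ℝ) < d1 ^ 3 + 5 * d1 ^ 2 * d2 - 5 * d1 * d2 ^ 2 + 15 * d2 ^ 3)]
  have haR : a < d1 ^ 2 := by
    rw [ha, div_mul_div_comm, div_lt_iff₀ (by positivity)]
    nlinarith [mul_pos (by linarith : (0:ℝ) < d1 - d2)
      (by positivity : (0:ℝ) < 15 * d1 ^ 4 + 10 * d1 ^ 3 * d2 + 6 * d1 * d2 ^ 3 + d2 ^ 4)]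
  have hnum : 0 < (2 * χ - 1) * d1 ^ 2 * d2 ^ 2 + a * (d1 ^ 2 - (d1 ^ 2 + d2 ^ 2) * χ) := by
    nlinarith [mul_pos (sub_pos.2 hχ1)
        (mul_pos (by positivity : (0:ℝ) < d1 ^ 2) (sub_pos.2 haL)),
      mul_pos hχ0 (mul_pos (by positivity : (0:ℝ) < d2 ^ 2) (sub_pos.2 haR))]
  apply div_pos _ (mul_pos hσ hden)
  have hfrac : 0 < 2 * Real.cos α / Real.sin α / 9 := by positivity
  exact mul_pos (mul_pos (mul_pos (mul_pos (mul_pos hfrac hρs)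
    (by linarith)) (by linarith)) hχ0) hnum
end

section
/- For x ∈ (0,1), x^2 < ((1+x)^5) / (16 (1 + x^3)). -/
theorem lower_bound_reformulated (x : ℝ) (hx : x ∈ Set.Ioo (0 : ℝ) 1) :
    x ^ 2 < (1 + x) ^ 5 / (16 * (1 + x ^ 3)) := by
  obtain ⟨h0, h1⟩ := hx
  rw [lt_div_iff₀ (by positivity)]
  nlinarith [sq_nonneg (1-x), sq_nonneg (1+x), sq_nonneg x, sq_nonneg (x*(1-x)), sq_nonneg (x^2*(1-x)), sq_nonneg (1-x^2), mul_pos h0 h0, sq_nonneg (x^2-x), sq_nonneg ((1-x)^2*(1+x))]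
end
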